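/- arXiv:2307.06976 — 2 statements merged into one kernel-verified Lean document; each statement's English description precedes it below -/
import Mathlib

section
/- Let G be a finite simple graph with unanimous thresholds. There is a target set of size at most k if and only if G has a vertex cover of size at most k. -/
open scoped Classical
open Finset

/-- One round of the activation (infection) process: every vertex whose number of
already-infected neighbours reaches its threshold becomes infected. -/
noncomputable def infectStep {V : Type*} [Fintype V] (G : SimpleGraph V) (t : V → ℕ)
    (S : Finset V) : Finset V :=
  S ∪ Finset.univ.filter fun v => t v ≤ ((G.neighborFinset v) ∩ S).card

/-- The set of infected vertices after `i` rounds, starting from `S`. -/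
noncomputable def infect {V : Type*} [Fintype V] (G : SimpleGraph V) (t : V → ℕ)
    (S : Finset V) : ℕ → Finset V
  | 0 => S
  | i + 1 => infectStep G t (infect G t S i)

/-- `S` is a target set if the activation process starting from `S` eventually
infects all vertices. -/
def IsTargetSet {V : Type*} [Fintype V] (G : SimpleGraph V) (t : V → ℕ)
    (S : Finset V) : Prop :=
  ∃ i, infect G t S i = Finset.univ

/-!
With threshold `deg v`, a vertex becomes infected exactly when all its neighbours are.
Hence one round turns a vertex cover into the whole vertex set, while conversely a
round never creates a vertex cover: if the newly infected `u` covers the edge `uv`,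
then `v` was already infected. So the target sets are precisely the vertex covers.
-/

namespace SimpleGraph

variable {V : Type*} [Fintype V] (G : SimpleGraph V)

theorem degree_le_card_neighborFinset_inter_iff (v : V) (S : Finset V) :
    G.degree v ≤ #(G.neighborFinset v ∩ S) ↔ G.neighborFinset v ⊆ S := by
  rw [← G.card_neighborFinset_eq_degree, ← inter_eq_left]
  exact ⟨fun h => eq_of_subset_of_card_le inter_subset_left h, fun h => (congrArg card h).ge⟩

theorem mem_infectStep_degree_iff {S : Finset V} {v : V} :
    v ∈ infectStep G (fun v => G.degree v) S ↔ v ∈ S ∨ G.neighborFinset v ⊆ S := by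
  simp only [infectStep, mem_union, mem_filter, mem_univ, true_and,
    degree_le_card_neighborFinset_inter_iff]

theorem infectStep_degree_eq_univ {S : Finset V} (hS : G.IsVertexCover S) :
    infectStep G (fun v => G.degree v) S = univ := by
  refine eq_univ_of_forall fun v => G.mem_infectStep_degree_iff.2 ?_
  by_cases hv : v ∈ S
  · exact .inl hv
  · exact .inr fun w hw => (hS ((G.mem_neighborFinset v w).1 hw)).resolve_left hv

theorem isVertexCover_of_infectStep_degree {S : Finset V}
    (hS : G.IsVertexCover (infectStep G (fun v => G.degree v) S)) : G.IsVertexCover S := by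
  have cover_of_mem {u v : V} (huv : G.Adj u v)
      (hu : u ∈ infectStep G (fun v => G.degree v) S) : u ∈ S ∨ v ∈ S :=
    (G.mem_infectStep_degree_iff.1 hu).imp_right
      fun hN => hN ((G.mem_neighborFinset u v).2 huv)
  intro u v huv
  rcases hS huv with hu | hv
  · exact cover_of_mem huv hu
  · exact (cover_of_mem huv.symm hv).symm

theorem isVertexCover_of_infect_degree {S : Finset V} :
    ∀ i, G.IsVertexCover (infect G (fun v => G.degree v) S i) → G.IsVertexCover S
  | 0, h => h
  | i + 1, h => isVertexCover_of_infect_degree i (G.isVertexCover_of_infectStep_degree h)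

theorem isTargetSet_degree_iff (S : Finset V) :
    IsTargetSet G (fun v => G.degree v) S ↔ G.IsVertexCover S := by
  refine ⟨fun ⟨i, hi⟩ => G.isVertexCover_of_infect_degree i ?_, fun hS => ⟨1, ?_⟩⟩
  · rw [hi, coe_univ]
    exact isVertexCover_univ
  · exact G.infectStep_degree_eq_univ hS

end SimpleGraph

/-- With unanimous thresholds, there is a target set of size at most k
iff there is a vertex cover of size at most k. -/
theorem tss_unanimous_card_iff_vertexCover_card {V : Type*} [Fintype V]
    (G : SimpleGraph V) (k : ℕ) :
    (∃ S : Finset V, S.card ≤ k ∧ IsTargetSet G (fun v => G.degree v) S) ↔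
      (∃ C : Finset V, C.card ≤ k ∧ ∀ u v : V, G.Adj u v → u ∈ C ∨ v ∈ C) := by
  simp only [SimpleGraph.isTargetSet_degree_iff]
  rfl
end

section
/- Cherry gadget correctness: Let G' be obtained from G by attaching a 'cherry' (a path g^ℓ – g^m – g^r on three new vertices) to a vertex v via the edge {v, g^m}, with thresholds t'(g^ℓ) = t'(g^r) = 1, t'(g^m) = 2, t'(v) = t(v) + 1, and t' = t elsewhere. Then G has a target set of size at most k if and only if G' has a target set of size at most k + 1. -/
/-!
A cherry vertex can only be activated from inside the cherry: the leaves see nothing but gᵐ,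
and gᵐ, of threshold 2, sees only v outside. So every target set of G' meets the cherry, and
its trace on V is a target set of G: on V the process in G' is dominated by the process in G,
because the one extra neighbour gᵐ of v is paid for by the extra unit of threshold of v.
Conversely, adding gᵐ to a target set of G activates the whole cherry in one round, after
which gᵐ supplies exactly that extra unit, so on V the process in G' dominates the one in G.
-/

open scoped Classical
open Finset

open Sum

section

variable {V : Type*} [Fintype V] (G : SimpleGraph V) (t : V → ℕ)

variable {G t} in
lemma mem_infectStep [DecidableEq V] {S : Finset V} {y : V} :
    y ∈ infectStep G t S ↔ y ∈ S ∨ t y ≤ #(G.neighborFinset y ∩ S) := by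
  simp only [infectStep, mem_union, mem_filter, mem_univ, true_and]
  -- `infectStep` intersects using the classical `DecidableEq` instance, not the given one
  convert Iff.rfl

lemma subset_infectStep (S : Finset V) : S ⊆ infectStep G t S := subset_union_left

lemma infect_mono (S : Finset V) : Monotone (infect G t S) :=
  monotone_nat_of_le_succ fun _ => subset_infectStep G t _

lemma subset_infect (S : Finset V) (i : ℕ) : S ⊆ infect G t S i :=
  infect_mono G t S (Nat.zero_le i)

end

lemma Finset.card_inter_eq_card_toLeft_inter_add_card_toRight_inter {α β : Type*}
    [DecidableEq α] [DecidableEq β] (u w : Finset (α ⊕ β)) :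
    #(u ∩ w) = #(u.toLeft ∩ w.toLeft) + #(u.toRight ∩ w.toRight) := by
  rw [← card_toLeft_add_card_toRight, toLeft_inter, toRight_inter]

/-- `G'` is `G` with the cherry `gˡ – gᵐ – gʳ`, encoded as `inr 0, inr 1, inr 2`, attached to `v`
by the edge `{v, gᵐ}`. -/
structure IsCherryExtension {V : Type*} (G : SimpleGraph V) (G' : SimpleGraph (V ⊕ Fin 3))
    (v : V) : Prop where
  adj_inl_inl : ∀ a b : V, G'.Adj (inl a) (inl b) ↔ G.Adj a b
  adj_inl_inr : ∀ (a : V) (i : Fin 3), G'.Adj (inl a) (inr i) ↔ (a = v ∧ i = 1)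
  adj_inr_inr : ∀ i j : Fin 3, G'.Adj (inr i) (inr j) ↔
      ((i = 0 ∧ j = 1) ∨ (i = 1 ∧ j = 0) ∨ (i = 1 ∧ j = 2) ∨ (i = 2 ∧ j = 1))

def cherryThreshold {V : Type*} [DecidableEq V] (t : V → ℕ) (v : V) : V ⊕ Fin 3 → ℕ :=
  Sum.elim (fun x => if x = v then t v + 1 else t x) (fun i : Fin 3 => if i = 1 then 2 else 1)

lemma cherryThreshold_inl {V : Type*} [DecidableEq V] (t : V → ℕ) (v x : V) :
    cherryThreshold t v (inl x) = t x + if x = v then 1 else 0 := by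
  unfold cherryThreshold
  split_ifs with h <;> simp [h]

lemma cherryThreshold_inr {V : Type*} [DecidableEq V] (t : V → ℕ) (v : V) (j : Fin 3) :
    cherryThreshold t v (inr j) = if j = 1 then 2 else 1 := rfl

namespace IsCherryExtension

variable {V : Type*} [Fintype V] {G : SimpleGraph V} {G' : SimpleGraph (V ⊕ Fin 3)} {v : V}

lemma toLeft_neighborFinset_inl (hG : IsCherryExtension G G' v) (x : V) :
    (G'.neighborFinset (inl x)).toLeft = G.neighborFinset x := by
  ext; simp [hG.adj_inl_inl]

lemma toRight_neighborFinset_inl [DecidableEq V] (hG : IsCherryExtension G G' v) (x : V) :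
    (G'.neighborFinset (inl x)).toRight = if x = v then {1} else ∅ := by
  ext; split_ifs <;> simp_all [hG.adj_inl_inr]

lemma toLeft_neighborFinset_inr (hG : IsCherryExtension G G' v) (j : Fin 3) :
    (G'.neighborFinset (inr j)).toLeft = if j = 1 then {v} else ∅ := by
  ext; split_ifs <;> simp_all [G'.adj_comm (inr _), hG.adj_inl_inr, eq_comm]

lemma card_neighborFinset_inl_inter [DecidableEq V] (hG : IsCherryExtension G G' v) (x : V)
    (B : Finset (V ⊕ Fin 3)) :
    #(G'.neighborFinset (inl x) ∩ B) =
      #(G.neighborFinset x ∩ B.toLeft) + if x = v ∧ inr 1 ∈ B then 1 else 0 := by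
  rw [card_inter_eq_card_toLeft_inter_add_card_toRight_inter, hG.toLeft_neighborFinset_inl,
    hG.toRight_neighborFinset_inl]
  congr 1
  split_ifs <;> simp_all

variable (t : V → ℕ)

lemma toLeft_infectStep_subset [DecidableEq V] (hG : IsCherryExtension G G' v) {A : Finset V}
    {B : Finset (V ⊕ Fin 3)} (hBA : B.toLeft ⊆ A) :
    (infectStep G' (cherryThreshold t v) B).toLeft ⊆ infectStep G t A := by
  intro x hx
  rw [mem_toLeft, mem_infectStep] at hx
  rw [mem_infectStep]
  refine hx.imp (fun h => hBA (mem_toLeft.2 h)) fun h => ?_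
  have hcount : #(G.neighborFinset x ∩ B.toLeft) ≤ #(G.neighborFinset x ∩ A) :=
    card_le_card (inter_subset_inter_left hBA)
  rw [cherryThreshold_inl, hG.card_neighborFinset_inl_inter] at h
  split_ifs at h <;> grind

lemma subset_toLeft_infectStep [DecidableEq V] (hG : IsCherryExtension G G' v) {A : Finset V}
    {B : Finset (V ⊕ Fin 3)} (hAB : A ⊆ B.toLeft) (hB : inr 1 ∈ B) :
    infectStep G t A ⊆ (infectStep G' (cherryThreshold t v) B).toLeft := by
  intro x hx
  rw [mem_infectStep] at hx
  rw [mem_toLeft, mem_infectStep]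
  refine hx.imp (fun h => mem_toLeft.1 (hAB h)) fun h => ?_
  have hcount : #(G.neighborFinset x ∩ A) ≤ #(G.neighborFinset x ∩ B.toLeft) :=
    card_le_card (inter_subset_inter_left hAB)
  rw [cherryThreshold_inl, hG.card_neighborFinset_inl_inter]
  split_ifs <;> grind

lemma inr_mem_infectStep [DecidableEq V] (hG : IsCherryExtension G G' v)
    {B : Finset (V ⊕ Fin 3)} (hB : inr 1 ∈ B) (j : Fin 3) :
    inr j ∈ infectStep G' (cherryThreshold t v) B := by
  rw [mem_infectStep]
  by_cases hj : j = 1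
  · exact Or.inl (hj ▸ hB)
  have hmid : inr 1 ∈ G'.neighborFinset (inr j) ∩ B :=
    mem_inter.2 ⟨by fin_cases j <;> simp_all [hG.adj_inr_inr], hB⟩
  right
  simpa [cherryThreshold_inr, hj] using card_pos.2 ⟨_, hmid⟩

lemma toRight_infectStep_eq_empty [DecidableEq V] (hG : IsCherryExtension G G' v)
    {B : Finset (V ⊕ Fin 3)} (hB : B.toRight = ∅) :
    (infectStep G' (cherryThreshold t v) B).toRight = ∅ := by
  refine eq_empty_of_forall_notMem fun j hj => ?_
  rw [mem_toRight, mem_infectStep, ← mem_toRight, hB,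
    card_inter_eq_card_toLeft_inter_add_card_toRight_inter, hB, hG.toLeft_neighborFinset_inr,
    cherryThreshold_inr, inter_empty, card_empty, add_zero] at hj
  simp only [notMem_empty, false_or] at hj
  split_ifs at hj
  · have hv : #({v} ∩ B.toLeft) ≤ 1 := (card_le_card inter_subset_left).trans_eq (card_singleton v)
    omega
  · simp_all

lemma toRight_infect_eq_empty [DecidableEq V] (hG : IsCherryExtension G G' v)
    {S : Finset (V ⊕ Fin 3)} (hS : S.toRight = ∅) (i : ℕ) :
    (infect G' (cherryThreshold t v) S i).toRight = ∅ := by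
  induction i with
  | zero => exact hS
  | succ i ih => exact hG.toRight_infectStep_eq_empty t ih

lemma toRight_nonempty_of_isTargetSet [DecidableEq V] (hG : IsCherryExtension G G' v)
    {S : Finset (V ⊕ Fin 3)} (hS : IsTargetSet G' (cherryThreshold t v) S) :
    S.toRight.Nonempty := by
  obtain ⟨i, hi⟩ := hS
  refine nonempty_iff_ne_empty.2 fun h => (univ_nonempty (α := Fin 3)).ne_empty ?_
  exact (by simpa [hi] using hG.toRight_infect_eq_empty t h i)

lemma toLeft_infect_subset [DecidableEq V] (hG : IsCherryExtension G G' v)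
    (S : Finset (V ⊕ Fin 3)) (i : ℕ) :
    (infect G' (cherryThreshold t v) S i).toLeft ⊆ infect G t S.toLeft i := by
  induction i with
  | zero => exact subset_rfl
  | succ i ih => exact hG.toLeft_infectStep_subset t ih

lemma isTargetSet_toLeft [DecidableEq V] (hG : IsCherryExtension G G' v)
    {S : Finset (V ⊕ Fin 3)} (hS : IsTargetSet G' (cherryThreshold t v) S) :
    IsTargetSet G t S.toLeft := by
  obtain ⟨i, hi⟩ := hS
  exact ⟨i, eq_univ_of_forall fun x => hG.toLeft_infect_subset t S i (by simp [hi])⟩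

lemma infect_subset_toLeft_infect [DecidableEq V] (hG : IsCherryExtension G G' v)
    (S : Finset V) (i : ℕ) :
    infect G t S i ⊆ (infect G' (cherryThreshold t v) (S.disjSum {1}) i).toLeft := by
  induction i with
  | zero => simp [infect]
  | succ i ih => exact hG.subset_toLeft_infectStep t ih (subset_infect _ _ _ i (by simp))

lemma isTargetSet_disjSum_singleton [DecidableEq V] (hG : IsCherryExtension G G' v) {S : Finset V}
    (hS : IsTargetSet G t S) :
    IsTargetSet G' (cherryThreshold t v) (S.disjSum {1}) := by
  obtain ⟨i, hi⟩ := hS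
  refine ⟨i + 1, ?_⟩
  rw [← univ_disjSum_univ, eq_disjSum_iff]
  constructor
  · have hV := (infect_mono G t S i.le_succ).trans (hG.infect_subset_toLeft_infect t S (i + 1))
    rwa [hi, univ_subset_iff] at hV
  · exact eq_univ_of_forall fun j =>
      mem_toRight.2 (hG.inr_mem_infectStep t (subset_infect _ _ _ i (by simp)) j)

end IsCherryExtension

/-- Cherry gadget correctness: attaching a cherry (path gˡ–gᵐ–gʳ, encoded as
Fin 3 with 0 = gˡ, 1 = gᵐ, 2 = gʳ) to a vertex v via the edge {v, gᵐ}, with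
thresholds 1, 2, 1 on the cherry and t(v) + 1 on v, the new instance has a
target set of size at most k + 1 iff the old one has one of size at most k. -/
theorem cherry_gadget_correct {V : Type*} [Fintype V] [DecidableEq V]
    (G : SimpleGraph V) (G' : SimpleGraph (V ⊕ Fin 3)) (t : V → ℕ) (v : V) (k : ℕ)
    (h1 : ∀ a b : V, G'.Adj (Sum.inl a) (Sum.inl b) ↔ G.Adj a b)
    (h2 : ∀ (a : V) (i : Fin 3), G'.Adj (Sum.inl a) (Sum.inr i) ↔ (a = v ∧ i = 1))
    (h3 : ∀ i j : Fin 3, G'.Adj (Sum.inr i) (Sum.inr j) ↔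
      ((i = 0 ∧ j = 1) ∨ (i = 1 ∧ j = 0) ∨ (i = 1 ∧ j = 2) ∨ (i = 2 ∧ j = 1))) :
    (∃ S : Finset V, S.card ≤ k ∧ IsTargetSet G t S) ↔
      (∃ S' : Finset (V ⊕ Fin 3), S'.card ≤ k + 1 ∧
        IsTargetSet G'
          (Sum.elim (fun x => if x = v then t v + 1 else t x)
            (fun i : Fin 3 => if i = 1 then 2 else 1)) S') := by
  have hG : IsCherryExtension G G' v := ⟨h1, h2, h3⟩
  constructor
  · rintro ⟨S, hS, hT⟩
    refine ⟨S.disjSum {1}, ?_, hG.isTargetSet_disjSum_singleton t hT⟩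
    rw [card_disjSum, card_singleton]
    omega
  · rintro ⟨S', hS', hT⟩
    refine ⟨S'.toLeft, ?_, hG.isTargetSet_toLeft t hT⟩
    have hcherry := (hG.toRight_nonempty_of_isTargetSet t hT).card_pos
    have hsplit := card_toLeft_add_card_toRight (u := S')
    omega
end
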